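/- (Theorem 2, Lorentz MLR logit.) Let a ∈ ℝ, let z ∈ ℝ^n with z ≠ 0, and let x ∈ L^n_K. Set w := (sinh(√(−K)·a)·‖z‖, cosh(√(−K)·a)·z) ∈ ℝ^{n+1}, α := cosh(√(−K)·a)·⟨z, x_s⟩ − sinh(√(−K)·a)·‖z‖·x_t (so that α = ⟨w, x⟩_L), β := √( ‖cosh(√(−K)·a)·z‖² − (sinh(√(−K)·a)·‖z‖)² ), and H̃_{z,a} := {y ∈ L^n_K : ⟨w, y⟩_L = 0}. Then the Lorentz MLR output logit sign(⟨w, x⟩_L) · √(⟨w, w⟩_L) · inf_{y ∈ H̃_{z,a}} d_L(x, y) equals (1/√(−K)) · sign(α) · β · | arsinh( √(−K)·α/β ) |, where sign denotes the real sign function and arsinh the inverse hyperbolic sine. -/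

import Mathlib

open scoped RealInnerProductSpace

noncomputable section

/-- Lorentzian inner product on `ℝ^{n+1} = ℝ × ℝ^n` (time component first). -/
def lprod {n : ℕ} (x y : ℝ × EuclideanSpace ℝ (Fin n)) : ℝ :=
  -(x.1 * y.1) + ⟪x.2, y.2⟫

/-- The Lorentz model `L^n_K`. -/
def LorentzModel (n : ℕ) (K : ℝ) : Set (ℝ × EuclideanSpace ℝ (Fin n)) :=
  {x | lprod x x = 1 / K ∧ 0 < x.1}

/-- Inverse hyperbolic cosine: `arcosh t = log (t + √(t² − 1))`. -/
def arcosh (t : ℝ) : ℝ := Real.log (t + Real.sqrt (t ^ 2 - 1))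

/-- Geodesic distance on the Lorentz model. -/
def dL {n : ℕ} (K : ℝ) (x y : ℝ × EuclideanSpace ℝ (Fin n)) : ℝ :=
  (1 / Real.sqrt (-K)) * arcosh (K * lprod x y)

/-- Origin of the Lorentz model. -/
def lorigin (n : ℕ) (K : ℝ) : ℝ × EuclideanSpace ℝ (Fin n) :=
  (1 / Real.sqrt (-K), 0)

/-! ### Auxiliary lemmas -/

theorem aux_revCS (a b c d p : ℝ) (hb : 0 ≤ b) (hd : 0 ≤ d) (hp : |p| ≤ b*d)
    (h1 : b^2 < a^2) (h2 : d^2 < c^2) :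
    (a^2 - b^2) * (c^2 - d^2) ≤ (a*c - p)^2 := by
  have h3 := abs_le.mp hp
  have hba : b < |a| := by nlinarith [sq_abs a, abs_nonneg a]
  have hdc : d < |c| := by nlinarith [sq_abs c, abs_nonneg c]
  have hbdac : b*d < |a*c| := by
    rw [abs_mul]
    exact mul_lt_mul'' hba hdc hb hd
  rcases le_or_gt 0 (a*c) with hac | hac
  · rw [abs_of_nonneg hac] at hbdac
    have k1 : 0 ≤ b*d - p := by linarith
    have k2 : 0 ≤ 2*(a*c) - (p + b*d) := by linarith
    nlinarith [mul_nonneg k1 k2, sq_nonneg (a*d - b*c)]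
  · rw [abs_of_neg hac] at hbdac
    have k1 : 0 ≤ p + b*d := by linarith
    nlinarith [mul_nonneg k1 (by linarith : (0:ℝ) ≤ b*d - p - 2*(a*c)), sq_nonneg (a*d + b*c)]

theorem aux_negProd (a b c d p : ℝ) (hb : 0 ≤ b) (hd : 0 ≤ d) (hp : |p| ≤ b*d)
    (h1 : b^2 < a^2) (h2 : d^2 < c^2) (ha : 0 < a) (hc : 0 < c) :
    -(a*c) + p < 0 := by
  have h3 := abs_le.mp hp
  have hba : b < a := by nlinarith
  have hdc : d < c := by nlinarith
  nlinarith [mul_lt_mul'' hba hdc hb hd]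

theorem aux_fwd (a b c d p : ℝ) (hb : 0 ≤ b) (hd : 0 ≤ d) (hp : |p| ≤ b*d)
    (h1 : b^2 < a^2) (h2 : d^2 < c^2) (hc : 0 < c) (hneg : -(a*c) + p < 0) :
    0 < a := by
  have h3 := abs_le.mp hp
  by_contra h
  push_neg at h
  have hba : b < -a := by nlinarith
  have hdc : d < c := by nlinarith
  nlinarith [mul_lt_mul'' hba hdc hb hd]

theorem lprod_comm' {n : ℕ} (x y : ℝ × EuclideanSpace ℝ (Fin n)) :
    lprod x y = lprod y x := by
  simp only [lprod, real_inner_comm]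
  ring_nf

theorem lprod_sub_left' {n : ℕ} (x y u : ℝ × EuclideanSpace ℝ (Fin n)) :
    lprod (x - y) u = lprod x u - lprod y u := by
  simp only [lprod, Prod.fst_sub, Prod.snd_sub, inner_sub_left]
  ring

theorem lprod_smul_left' {n : ℕ} (c : ℝ) (x u : ℝ × EuclideanSpace ℝ (Fin n)) :
    lprod (c • x) u = c * lprod x u := by
  simp only [lprod, Prod.smul_fst, Prod.smul_snd, smul_eq_mul, real_inner_smul_left]
  ring

theorem lprod_sub_right' {n : ℕ} (u x y : ℝ × EuclideanSpace ℝ (Fin n)) :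
    lprod u (x - y) = lprod u x - lprod u y := by
  rw [lprod_comm', lprod_sub_left', lprod_comm' x u, lprod_comm' y u]

theorem lprod_smul_right' {n : ℕ} (c : ℝ) (u x : ℝ × EuclideanSpace ℝ (Fin n)) :
    lprod u (c • x) = c * lprod u x := by
  rw [lprod_comm', lprod_smul_left', lprod_comm' x u]

theorem arcosh_mono' (a b : ℝ) (ha : 1 ≤ a) (hab : a ≤ b) : arcosh a ≤ arcosh b := by
  unfold arcosh
  apply Real.log_le_log (by positivity)
  have : Real.sqrt (a^2-1) ≤ Real.sqrt (b^2-1) := by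
    apply Real.sqrt_le_sqrt; nlinarith
  linarith

theorem arcosh_sqrt_one_add_sq (u : ℝ) :
    arcosh (Real.sqrt (1 + u^2)) = |Real.arsinh u| := by
  unfold arcosh
  have h1 : Real.sqrt (1+u^2)^2 = 1 + u^2 := Real.sq_sqrt (by positivity)
  rw [h1, show 1 + u^2 - 1 = u^2 by ring, Real.sqrt_sq_eq_abs]
  have habs : |Real.arsinh u| = Real.arsinh |u| := by
    rcases le_or_gt 0 u with h | h
    · rw [abs_of_nonneg h, abs_of_nonneg (Real.arsinh_nonneg_iff.mpr h)]
    · rw [abs_of_neg h, abs_of_neg (Real.arsinh_neg_iff.mpr h), ← Real.arsinh_neg]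
  rw [habs]
  have : Real.arsinh |u| = Real.log (|u| + Real.sqrt (1 + |u|^2)) := rfl
  rw [this, sq_abs, add_comm]

/-- For timelike `u` (with `lprod u u < 0`) and `y` in the Lorentz model,
reverse Cauchy–Schwarz. -/
theorem lprod_revCS {n : ℕ} (u y : ℝ × EuclideanSpace ℝ (Fin n))
    (hu : lprod u u < 0) (hy : lprod y y < 0) :
    lprod u u * lprod y y ≤ (lprod u y)^2 := by
  have hu' : ‖u.2‖^2 < u.1^2 := by
    have := real_inner_self_eq_norm_sq u.2
    simp only [lprod] at hu; nlinarith
  have hy' : ‖y.2‖^2 < y.1^2 := by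
    have := real_inner_self_eq_norm_sq y.2
    simp only [lprod] at hy; nlinarith
  have hcs : |⟪u.2, y.2⟫| ≤ ‖u.2‖ * ‖y.2‖ := abs_real_inner_le_norm u.2 y.2
  have key := aux_revCS u.1 ‖u.2‖ y.1 ‖y.2‖ ⟪u.2, y.2⟫ (norm_nonneg _) (norm_nonneg _)
    hcs hu' hy'
  have e1 : lprod u u = -(u.1^2) + ‖u.2‖^2 := by
    simp only [lprod, real_inner_self_eq_norm_sq]; ring
  have e2 : lprod y y = -(y.1^2) + ‖y.2‖^2 := by
    simp only [lprod, real_inner_self_eq_norm_sq]; ring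
  have e3 : (lprod u y)^2 = (u.1*y.1 - ⟪u.2, y.2⟫)^2 := by
    simp only [lprod]; ring
  rw [e1, e2, e3]
  nlinarith [key]

/-- Two forward timelike vectors have negative Lorentz product. -/
theorem lprod_neg_of_fwd {n : ℕ} (x y : ℝ × EuclideanSpace ℝ (Fin n))
    (hxt : lprod x x < 0) (hyt : lprod y y < 0) (hx1 : 0 < x.1) (hy1 : 0 < y.1) :
    lprod x y < 0 := by
  have hx' : ‖x.2‖^2 < x.1^2 := by
    have := real_inner_self_eq_norm_sq x.2
    simp only [lprod] at hxt; nlinarith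
  have hy' : ‖y.2‖^2 < y.1^2 := by
    have := real_inner_self_eq_norm_sq y.2
    simp only [lprod] at hyt; nlinarith
  have hcs : |⟪x.2, y.2⟫| ≤ ‖x.2‖ * ‖y.2‖ := abs_real_inner_le_norm x.2 y.2
  have := aux_negProd x.1 ‖x.2‖ y.1 ‖y.2‖ ⟪x.2, y.2⟫ (norm_nonneg _) (norm_nonneg _)
    hcs hx' hy' hx1 hy1
  simpa [lprod] using this

/-- A timelike vector with negative product against a forward timelike vector is forward. -/
theorem lprod_fwd {n : ℕ} (u y : ℝ × EuclideanSpace ℝ (Fin n))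
    (hut : lprod u u < 0) (hyt : lprod y y < 0) (hy1 : 0 < y.1)
    (hneg : lprod u y < 0) : 0 < u.1 := by
  have hu' : ‖u.2‖^2 < u.1^2 := by
    have := real_inner_self_eq_norm_sq u.2
    simp only [lprod] at hut; nlinarith
  have hy' : ‖y.2‖^2 < y.1^2 := by
    have := real_inner_self_eq_norm_sq y.2
    simp only [lprod] at hyt; nlinarith
  have hcs : |⟪u.2, y.2⟫| ≤ ‖u.2‖ * ‖y.2‖ := abs_real_inner_le_norm u.2 y.2
  exact aux_fwd u.1 ‖u.2‖ y.1 ‖y.2‖ ⟪u.2, y.2⟫ (norm_nonneg _) (norm_nonneg _)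
    hcs hu' hy' hy1 (by simpa [lprod] using hneg)

set_option maxHeartbeats 1000000 in
theorem lorentz_mlr_logit
    (n : ℕ) (hn : 1 ≤ n) (K : ℝ) (hK : K < 0)
    (a : ℝ) (z : EuclideanSpace ℝ (Fin n)) (hz : z ≠ 0)
    (x : ℝ × EuclideanSpace ℝ (Fin n)) (hx : x ∈ LorentzModel n K)
    (w : ℝ × EuclideanSpace ℝ (Fin n))
    (hw : w = (Real.sinh (Real.sqrt (-K) * a) * ‖z‖,
               Real.cosh (Real.sqrt (-K) * a) • z))
    (α : ℝ)
    (hα : α = Real.cosh (Real.sqrt (-K) * a) * ⟪z, x.2⟫ -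
              Real.sinh (Real.sqrt (-K) * a) * ‖z‖ * x.1)
    (β : ℝ)
    (hβ : β = Real.sqrt (‖Real.cosh (Real.sqrt (-K) * a) • z‖ ^ 2 -
              (Real.sinh (Real.sqrt (-K) * a) * ‖z‖) ^ 2))
    (H : Set (ℝ × EuclideanSpace ℝ (Fin n)))
    (hH : H = {y ∈ LorentzModel n K | lprod w y = 0}) :
    Real.sign (lprod w x) * Real.sqrt (lprod w w) * sInf (dL K x '' H) =
      (1 / Real.sqrt (-K)) * Real.sign α * β *
        |Real.arsinh (Real.sqrt (-K) * α / β)| := by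
  -- Notation
  set s := Real.sqrt (-K) with hsdef
  have hs : 0 < s := Real.sqrt_pos.mpr (by linarith)
  have hs2 : s^2 = -K := Real.sq_sqrt (by linarith)
  have hz0 : 0 < ‖z‖ := norm_pos_iff.mpr hz
  set ch := Real.cosh (s * a) with hchdef
  set sh := Real.sinh (s * a) with hshdef
  have hch : 0 < ch := Real.cosh_pos (s*a)
  have hid : ch^2 - sh^2 = 1 := Real.cosh_sq_sub_sinh_sq (s*a)
  obtain ⟨hxx, hx1⟩ := hx
  -- Basic products
  have hinner : ⟪ch • z, ch • z⟫ = ch^2 * ‖z‖^2 := by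
    rw [real_inner_smul_left, real_inner_smul_right, real_inner_self_eq_norm_sq]
    ring
  have hww : lprod w w = ‖z‖^2 := by
    rw [hw]
    show -(sh * ‖z‖ * (sh * ‖z‖)) + ⟪ch • z, ch • z⟫ = ‖z‖^2
    rw [hinner]
    nlinarith [hid]
  have hwx : lprod w x = α := by
    rw [hw, hα]
    simp only [lprod, real_inner_smul_left]
    ring
  have hβz : β = ‖z‖ := by
    rw [hβ, norm_smul, Real.norm_eq_abs, abs_of_pos hch]
    rw [show (ch * ‖z‖)^2 - (sh * ‖z‖)^2 = ‖z‖^2 * (ch^2 - sh^2) by ring, hid]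
    simp [Real.sqrt_sq hz0.le]
  -- x is timelike forward
  have hxt : lprod x x < 0 := by rw [hxx]; exact div_neg_of_pos_of_neg one_pos hK
  -- The perpendicular component
  set m : ℝ := α / ‖z‖^2 with hmdef
  set xp : ℝ × EuclideanSpace ℝ (Fin n) := x - m • w with hxpdef
  have hwxp : lprod w xp = 0 := by
    rw [hxpdef, lprod_sub_right', lprod_smul_right', hww, hwx, hmdef]
    field_simp
    ring
  have hxpx : lprod xp x = lprod xp xp := by
    have e1 : lprod xp x - lprod xp xp = lprod xp (m • w) := by
      rw [← lprod_sub_right', hxpdef]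
      rw [show x - (x - m • w) = m • w from by abel]
    have e2 : lprod xp (m • w) = 0 := by
      rw [lprod_smul_right', lprod_comm', hwxp]; ring
    have h0 : lprod xp x - lprod xp xp = 0 := by rw [e1, e2]
    linarith
  set T : ℝ := ‖z‖^2 - K * α^2 with hTdef
  have hT : 0 < T := by nlinarith [sq_nonneg α]
  have hsT : 0 < Real.sqrt T := Real.sqrt_pos.mpr hT
  have hsT2 : Real.sqrt T ^ 2 = T := Real.sq_sqrt hT.le
  have hsT2' : Real.sqrt T ^ 2 = ‖z‖^2 - K * α^2 := hsT2.trans hTdef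
  have hxpxp : lprod xp xp = T / (K * ‖z‖^2) := by
    have e : lprod xp xp = lprod x x - 2 * m * α + m^2 * ‖z‖^2 := by
      rw [hxpdef, lprod_sub_left', lprod_sub_right', lprod_sub_right',
        lprod_smul_left', lprod_smul_right', lprod_smul_right', lprod_smul_left',
        hww, hwx, lprod_comm' x w, hwx]
      ring
    rw [e, hxx, hmdef, hTdef]
    have hzne : ‖z‖ ≠ 0 := ne_of_gt hz0
    have hKne : K ≠ 0 := ne_of_lt hK
    field_simp
    ring
  have hxpt : lprod xp xp < 0 := by
    rw [hxpxp]
    exact div_neg_of_pos_of_neg hT (mul_neg_of_neg_of_pos hK (by positivity))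
  -- x_perp is forward
  have hxpx_neg : lprod xp x < 0 := by
    rw [hxpx]; exact hxpt
  have hxp1 : 0 < xp.1 := lprod_fwd xp x hxpt hxt hx1 hxpx_neg
  -- The minimizer
  set γ : ℝ := ‖z‖ / Real.sqrt T with hγdef
  have hγ : 0 < γ := div_pos hz0 hsT
  set y0 : ℝ × EuclideanSpace ℝ (Fin n) := γ • xp with hy0def
  have hy0_mem : y0 ∈ H := by
    rw [hH]
    refine ⟨⟨?_, ?_⟩, ?_⟩
    · rw [hy0def, lprod_smul_left', lprod_smul_right', hxpxp, hγdef]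
      have hTne : T ≠ 0 := ne_of_gt hT
      have hzne : ‖z‖ ≠ 0 := ne_of_gt hz0
      have hKne : K ≠ 0 := ne_of_lt hK
      have hsTne : Real.sqrt T ≠ 0 := ne_of_gt hsT
      field_simp
      linear_combination (-1 : ℝ) * hsT2
    · show 0 < γ * xp.1
      exact mul_pos hγ hxp1
    · rw [hy0def, lprod_smul_right', hwxp]; ring
  -- distance to the minimizer
  have hKxy0 : K * lprod x y0 = Real.sqrt T / ‖z‖ := by
    have e : lprod x y0 = γ * lprod xp xp := by
      rw [hy0def, lprod_smul_right', lprod_comm' x xp, hxpx]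
    rw [e, hxpxp, hγdef]
    have hTne : T ≠ 0 := ne_of_gt hT
    have hzne : ‖z‖ ≠ 0 := ne_of_gt hz0
    have hKne : K ≠ 0 := ne_of_lt hK
    have hsTne : Real.sqrt T ≠ 0 := ne_of_gt hsT
    field_simp
    linear_combination (-1 : ℝ) * hsT2
  -- the infimum value
  set D : ℝ := (1/s) * arcosh (Real.sqrt T / ‖z‖) with hDdef
  have hdxy0 : dL K x y0 = D := by
    rw [hDdef, dL, ← hKxy0]
  -- the value of arcosh
  have harc : arcosh (Real.sqrt T / ‖z‖) = |Real.arsinh (s * α / ‖z‖)| := by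
    have e1 : 1 + (s * α / ‖z‖)^2 = T / ‖z‖^2 := by
      rw [hTdef]
      field_simp
      nlinarith [hs2]
    have e2 : Real.sqrt (1 + (s * α / ‖z‖)^2) = Real.sqrt T / ‖z‖ := by
      rw [e1, show T / ‖z‖^2 = T / ‖z‖^2 from rfl]
      rw [Real.sqrt_div hT.le, Real.sqrt_sq hz0.le]
    rw [← e2, arcosh_sqrt_one_add_sq]
  -- T/‖z‖² bound : √T/‖z‖ ≥ 1
  have hT1 : 1 ≤ Real.sqrt T / ‖z‖ := by
    rw [le_div_iff₀ hz0, one_mul]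
    have : ‖z‖ = Real.sqrt (‖z‖^2) := (Real.sqrt_sq hz0.le).symm
    rw [this]
    apply Real.sqrt_le_sqrt
    nlinarith [sq_nonneg α]
  -- lower bound for all points of H
  have hlb : ∀ y ∈ H, D ≤ dL K x y := by
    intro y hy
    rw [hH] at hy
    obtain ⟨⟨hyy, hy1⟩, hwy⟩ := hy
    have hyt : lprod y y < 0 := by rw [hyy]; exact div_neg_of_pos_of_neg one_pos hK
    -- lprod x y = lprod xp y
    have hxy_eq : lprod x y = lprod xp y := by
      rw [hxpdef, lprod_sub_left', lprod_smul_left', hwy]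
      ring
    have hxy_neg : lprod x y < 0 := lprod_neg_of_fwd x y hxt hyt hx1 hy1
    have hKxy_pos : 0 < K * lprod x y := mul_pos_of_neg_of_neg hK hxy_neg
    -- reverse CS
    have hcs := lprod_revCS xp y hxpt hyt
    have hsq : (Real.sqrt T / ‖z‖)^2 ≤ (K * lprod x y)^2 := by
      rw [hxy_eq]
      have e : (K * lprod xp y)^2 = K^2 * (lprod xp y)^2 := by ring
      rw [div_pow, hsT2, e]
      have : lprod xp xp * lprod y y = T / (K^2 * ‖z‖^2) := by
        rw [hxpxp, hyy]
        field_simp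
      rw [this] at hcs
      have hK2 : 0 < K^2 := by rw [sq]; exact mul_pos_of_neg_of_neg hK hK
      calc T/‖z‖^2 = K^2*T/(K^2*‖z‖^2) := (mul_div_mul_left T (‖z‖^2) (ne_of_gt hK2)).symm
        _ = K^2 * (T/(K^2*‖z‖^2)) := mul_div_assoc _ _ _
        _ ≤ K^2 * (lprod xp y)^2 := mul_le_mul_of_nonneg_left hcs hK2.le
    have hle : Real.sqrt T / ‖z‖ ≤ K * lprod x y := by
      have h1 := Real.sqrt_le_sqrt hsq
      rwa [Real.sqrt_sq (by positivity), Real.sqrt_sq hKxy_pos.le] at h1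
    rw [hDdef, dL]
    have := arcosh_mono' (Real.sqrt T / ‖z‖) (K * lprod x y) hT1 hle
    have h1s : 0 ≤ 1/s := by positivity
    calc 1/s * arcosh (Real.sqrt T / ‖z‖) ≤ 1/s * arcosh (K * lprod x y) := by
          apply mul_le_mul_of_nonneg_left this h1s
      _ = _ := by rfl
  -- the infimum
  have hinf : sInf (dL K x '' H) = D := by
    apply IsLeast.csInf_eq
    constructor
    · exact ⟨y0, hy0_mem, hdxy0⟩
    · rintro v ⟨y, hy, rfl⟩
      exact hlb y hy
  rw [hinf, hwx, hww, Real.sqrt_sq hz0.le, hDdef, harc, hβz]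
  ring
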